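/- Let G : ℝ^d → ℝ be a Schwartz function, 1 ≤ p ≤ ∞, and S ⊆ ℝ^d measurable with sup_{x∈ℝ^d} |S ∩ B_ℓ(x)| ≤ V. Then for any u₀ ∈ L^p(ℝ^d), the function II(x) = ∫ G(x−y)·𝟙_{B_ℓ}(x−y)·u₀(y)·𝟙_S(y) dy satisfies ‖II‖_{L^p} ≤ C_d ‖G‖_{L^∞} V^{1−1/p} ℓ^{d/p} ‖u₀‖_{L^p}, where C_d depends only on d. -/

import Mathlib

open MeasureTheory ENNReal Metric

/-!
Bound `|II(x)| ≤ ∫ K(x,y) |u₀(y)| dy` with the kernel `K(x,y) = |G(x-y)| 𝟙_{B_ℓ}(x-y) 𝟙_S(y)`.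
Its row integrals are at most `‖G‖_∞ |S ∩ B_ℓ(x)| ≤ ‖G‖_∞ V` and its column integrals at most
`‖G‖_∞ |B_ℓ|`. Schur's test (Hölder in `y` against the measure `K(x,y) dy`, then Tonelli) bounds
the operator with kernel `K` on `L^p` by `(‖G‖_∞ V)^{1-1/p} (‖G‖_∞ |B_ℓ|)^{1/p}`, and
`|B_ℓ|^{1/p} = ℓ^{d/p} |B_1|^{1/p} ≤ ℓ^{d/p} max(1, |B_1|)`.
-/

theorem Continuous.enorm_le_eLpNorm_top {X E : Type*} [TopologicalSpace X] [MeasurableSpace X]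
    [NormedAddCommGroup E] {μ : Measure X} [μ.IsOpenPosMeasure] {f : X → E} (hf : Continuous f)
    (x : X) : ‖f x‖ₑ ≤ eLpNorm f ⊤ μ := by
  rw [eLpNorm_exponent_top, eLpNormEssSup_eq_essSup_enorm, ← iSup_eq_essSup fun y a ha ↦
    (isOpen_lt continuous_const hf.enorm).measure_ne_zero μ ⟨y, ha⟩]
  exact le_iSup (fun y ↦ ‖f y‖ₑ) x

theorem ENNReal.one_div_toReal_le_one {p : ℝ≥0∞} (hp : 1 ≤ p) : 1 / p.toReal ≤ 1 := by
  rw [one_div, ← ENNReal.toReal_inv]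
  exact ENNReal.toReal_le_of_le_ofReal zero_le_one (by simpa using ENNReal.inv_le_one.2 hp)

theorem lintegral_mul_rpow_le_of_lintegral_le {β : Type*} [MeasurableSpace β] {ν : Measure β}
    {g f : β → ℝ≥0∞} {A : ℝ≥0∞} (hg : AEMeasurable g ν) (hf : AEMeasurable f ν)
    (hA : ∫⁻ y, g y ∂ν ≤ A) {p : ℝ} (hp : 1 ≤ p) :
    (∫⁻ y, g y * f y ∂ν) ^ p ≤ A ^ (p - 1) * ∫⁻ y, g y * f y ^ p ∂ν := by
  have hp0 : 0 < p := by linarith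
  have hq : 0 ≤ 1 - p⁻¹ := sub_nonneg.2 (inv_le_one_of_one_le₀ hp)
  have hsplit : ∀ y, g y * f y = g y ^ (1 - p⁻¹) * (g y * f y ^ p) ^ p⁻¹ := fun y ↦ by
    rw [ENNReal.mul_rpow_of_nonneg _ _ (by positivity), ← ENNReal.rpow_mul, mul_inv_cancel₀ hp0.ne',
      ENNReal.rpow_one, ← mul_assoc, ← ENNReal.rpow_add_of_nonneg _ _ hq (by positivity),
      sub_add_cancel, ENNReal.rpow_one]
  have holder : ∫⁻ y, g y * f y ∂ν
      ≤ (∫⁻ y, g y ∂ν) ^ (1 - p⁻¹) * (∫⁻ y, g y * f y ^ p ∂ν) ^ p⁻¹ := by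
    rw [lintegral_congr hsplit]
    exact ENNReal.lintegral_mul_norm_pow_le hg (hg.mul (hf.pow_const p)) hq (by positivity)
      (by ring)
  calc (∫⁻ y, g y * f y ∂ν) ^ p
      ≤ ((∫⁻ y, g y ∂ν) ^ (1 - p⁻¹) * (∫⁻ y, g y * f y ^ p ∂ν) ^ p⁻¹) ^ p := by gcongr
    _ ≤ (A ^ (1 - p⁻¹) * (∫⁻ y, g y * f y ^ p ∂ν) ^ p⁻¹) ^ p := by gcongr
    _ = A ^ (p - 1) * ∫⁻ y, g y * f y ^ p ∂ν := by
      rw [ENNReal.mul_rpow_of_nonneg _ _ hp0.le, ← ENNReal.rpow_mul, ← ENNReal.rpow_mul,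
        inv_mul_cancel₀ hp0.ne', ENNReal.rpow_one, sub_mul, one_mul, inv_mul_cancel₀ hp0.ne']

section Schur

variable {α β : Type*} [MeasurableSpace α] [MeasurableSpace β] {μ : Measure α} {ν : Measure β}
  [SFinite μ] [SFinite ν] {k : α → β → ℝ≥0∞} {A B : ℝ≥0∞}

theorem lintegral_rpow_lintegral_mul_le_of_schur (hk : Measurable (Function.uncurry k))
    {f : β → ℝ≥0∞} (hf : Measurable f) (hA : ∀ x, ∫⁻ y, k x y ∂ν ≤ A)
    (hB : ∀ y, ∫⁻ x, k x y ∂μ ≤ B) {p : ℝ} (hp : 1 ≤ p) :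
    ∫⁻ x, (∫⁻ y, k x y * f y ∂ν) ^ p ∂μ ≤ A ^ (p - 1) * B * ∫⁻ y, f y ^ p ∂ν := by
  have hkfp : Measurable (Function.uncurry fun x y ↦ k x y * f y ^ p) :=
    hk.mul ((hf.pow_const p).comp measurable_snd)
  calc ∫⁻ x, (∫⁻ y, k x y * f y ∂ν) ^ p ∂μ
      ≤ ∫⁻ x, A ^ (p - 1) * ∫⁻ y, k x y * f y ^ p ∂ν ∂μ :=
        lintegral_mono fun x ↦ lintegral_mul_rpow_le_of_lintegral_le
          (hk.comp measurable_prodMk_left).aemeasurable hf.aemeasurable (hA x) hp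
    _ = A ^ (p - 1) * ∫⁻ y, (∫⁻ x, k x y ∂μ) * f y ^ p ∂ν := by
      rw [lintegral_const_mul _ hkfp.lintegral_prod_right,
        lintegral_lintegral_swap hkfp.aemeasurable]
      congr 1
      exact lintegral_congr fun y ↦ lintegral_mul_const _ (hk.comp measurable_prodMk_right)
    _ ≤ A ^ (p - 1) * ∫⁻ y, B * f y ^ p ∂ν := by gcongr with y; exact hB y
    _ = A ^ (p - 1) * B * ∫⁻ y, f y ^ p ∂ν := by
      rw [lintegral_const_mul _ (hf.pow_const p), mul_assoc]

theorem eLpNorm_lintegral_mul_le_of_schur (hk : Measurable (Function.uncurry k))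
    {f : β → ℝ≥0∞} (hf : AEMeasurable f ν) (hA : ∀ x, ∫⁻ y, k x y ∂ν ≤ A)
    (hB : ∀ y, ∫⁻ x, k x y ∂μ ≤ B) {p : ℝ≥0∞} (hp : 1 ≤ p) :
    eLpNorm (fun x ↦ ∫⁻ y, k x y * f y ∂ν) p μ
      ≤ A ^ (1 - 1 / p.toReal) * B ^ (1 / p.toReal) * eLpNorm f p ν := by
  obtain ⟨g, hg, hfg⟩ := hf
  have hT : (fun x ↦ ∫⁻ y, k x y * f y ∂ν) = fun x ↦ ∫⁻ y, k x y * g y ∂ν :=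
    funext fun x ↦ lintegral_congr_ae (hfg.mono fun y hy ↦ by simp only [hy])
  rw [hT, eLpNorm_congr_ae hfg]
  rcases eq_top_or_lt_top p with rfl | hp_top
  · simp only [eLpNorm_exponent_top, toReal_top, _root_.div_zero, sub_zero, rpow_one, rpow_zero,
      mul_one]
    refine eLpNormEssSup_le_of_ae_enorm_bound (ae_of_all _ fun x ↦ ?_)
    calc ∫⁻ y, k x y * g y ∂ν ≤ ∫⁻ y, k x y * eLpNormEssSup g ν ∂ν :=
          lintegral_mono_ae ((enorm_ae_le_eLpNormEssSup g ν).mono fun y hy ↦ by gcongr; exact hy)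
      _ = (∫⁻ y, k x y ∂ν) * eLpNormEssSup g ν :=
          lintegral_mul_const _ (hk.comp measurable_prodMk_left)
      _ ≤ A * eLpNormEssSup g ν := by gcongr; exact hA x
  · have hp0 : p ≠ 0 := (zero_lt_one.trans_le hp).ne'
    have hp1 : 1 ≤ p.toReal := by simpa using ENNReal.toReal_mono hp_top.ne hp
    simp only [eLpNorm_eq_lintegral_rpow_enorm_toReal hp0 hp_top.ne, enorm_eq_self]
    calc (∫⁻ x, (∫⁻ y, k x y * g y ∂ν) ^ p.toReal ∂μ) ^ (1 / p.toReal)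
        ≤ (A ^ (p.toReal - 1) * B * ∫⁻ y, g y ^ p.toReal ∂ν) ^ (1 / p.toReal) := by
          gcongr
          exact lintegral_rpow_lintegral_mul_le_of_schur hk hg hA hB hp1
      _ = A ^ (1 - 1 / p.toReal) * B ^ (1 / p.toReal)
            * (∫⁻ y, g y ^ p.toReal ∂ν) ^ (1 / p.toReal) := by
          rw [mul_rpow_of_nonneg _ _ (by positivity), mul_rpow_of_nonneg _ _ (by positivity),
            ← rpow_mul]
          congr 3
          field_simp

end Schur

section LocalKernel

variable {E F : Type*} [NormedAddCommGroup E] [NormedAddCommGroup F]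

noncomputable def localKernel (G : E → F) (ℓ : ℝ) (S : Set E) (x y : E) : ℝ≥0∞ :=
  ‖(ball 0 ℓ).indicator G (x - y)‖ₑ * S.indicator 1 y

theorem enorm_indicator_ball_sub_le {G : E → F} {M : ℝ≥0∞} (hGM : ∀ z, ‖G z‖ₑ ≤ M) (ℓ : ℝ)
    (x y : E) : ‖(ball 0 ℓ).indicator G (x - y)‖ₑ ≤ (ball x ℓ).indicator (fun _ ↦ M) y := by
  by_cases hy : y ∈ ball x ℓ
  · rw [Set.indicator_of_mem hy]
    by_cases hxy : x - y ∈ ball (0 : E) ℓ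
    · rw [Set.indicator_of_mem hxy]; exact hGM _
    · simp [Set.indicator_of_notMem hxy]
  · have hxy : x - y ∉ ball (0 : E) ℓ := by
      rwa [mem_ball_zero_iff, ← dist_eq_norm, dist_comm, ← mem_ball]
    simp [Set.indicator_of_notMem hxy]

theorem enorm_integral_indicator_ball_mul_le [MeasurableSpace E] (μ : Measure E) (G : E → ℝ)
    (ℓ : ℝ) (S : Set E) (u : E → ℝ) (x : E) :
    ‖∫ y, (ball 0 ℓ).indicator G (x - y) * S.indicator u y ∂μ‖ₑ
      ≤ ∫⁻ y, localKernel G ℓ S x y * ‖u y‖ₑ ∂μ := by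
  refine (enorm_integral_le_lintegral_enorm _).trans (le_of_eq (lintegral_congr fun y ↦ ?_))
  by_cases hy : y ∈ S <;> simp [localKernel, hy, enorm_mul]

variable [MeasurableSpace E] [BorelSpace E] {μ : Measure E} {G : E → F} {M : ℝ≥0∞} {S : Set E}

theorem measurable_uncurry_localKernel [SecondCountableTopology E] (hG : StronglyMeasurable G)
    (ℓ : ℝ) (hS : MeasurableSet S) : Measurable (Function.uncurry (localKernel G ℓ S)) :=
  ((hG.indicator measurableSet_ball).comp_measurable measurable_sub).enorm.mul
    ((measurable_one.indicator hS).comp measurable_snd)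

theorem lintegral_localKernel_right_le (hGM : ∀ z, ‖G z‖ₑ ≤ M) (ℓ : ℝ) (hS : MeasurableSet S)
    (x : E) : ∫⁻ y, localKernel G ℓ S x y ∂μ ≤ M * μ (S ∩ ball x ℓ) := by
  calc ∫⁻ y, localKernel G ℓ S x y ∂μ ≤ ∫⁻ y, (S ∩ ball x ℓ).indicator (fun _ ↦ M) y ∂μ := by
        refine lintegral_mono fun y ↦ ?_
        rw [localKernel, ← Set.indicator_indicator]
        by_cases hy : y ∈ S
        · simpa [hy] using enorm_indicator_ball_sub_le hGM ℓ x y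
        · simp [hy]
    _ = M * μ (S ∩ ball x ℓ) := lintegral_indicator_const (hS.inter measurableSet_ball) M

theorem lintegral_localKernel_left_le [μ.IsAddHaarMeasure] (hGM : ∀ z, ‖G z‖ₑ ≤ M) (ℓ : ℝ)
    (y : E) : ∫⁻ x, localKernel G ℓ S x y ∂μ ≤ M * μ (ball 0 ℓ) := by
  calc ∫⁻ x, localKernel G ℓ S x y ∂μ ≤ ∫⁻ x, (ball y ℓ).indicator (fun _ ↦ M) x ∂μ := by
        refine lintegral_mono fun x ↦ ?_
        have hsymm : (ball x ℓ).indicator (fun _ ↦ M) y = (ball y ℓ).indicator (fun _ ↦ M) x := by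
          classical rw [Set.indicator_apply, Set.indicator_apply, mem_ball_comm]
        calc localKernel G ℓ S x y ≤ ‖(ball 0 ℓ).indicator G (x - y)‖ₑ * 1 := by
              rw [localKernel]; gcongr; exact Set.indicator_le_self' (fun _ _ ↦ zero_le_one) y
          _ ≤ _ := by rw [mul_one, ← hsymm]; exact enorm_indicator_ball_sub_le hGM ℓ x y
    _ = M * μ (ball 0 ℓ) := by
        rw [lintegral_indicator_const measurableSet_ball, Measure.addHaar_ball_center]

end LocalKernel

theorem Measure.addHaar_ball_rpow_le {E : Type*} [NormedAddCommGroup E] [NormedSpace ℝ E]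
    [FiniteDimensional ℝ E] [MeasurableSpace E] [BorelSpace E] (μ : Measure E)
    [μ.IsAddHaarMeasure] {ℓ : ℝ} (hℓ : 0 < ℓ) {q : ℝ} (hq₀ : 0 ≤ q) (hq₁ : q ≤ 1) :
    μ (ball (0 : E) ℓ) ^ q
      ≤ ENNReal.ofReal (max 1 (μ (ball (0 : E) 1)).toReal * ℓ ^ (Module.finrank ℝ E * q)) := by
  set c := (μ (ball (0 : E) 1)).toReal
  have hc : c ^ q ≤ max 1 c := by
    rcases le_total c 1 with h | h
    · exact (Real.rpow_le_one ENNReal.toReal_nonneg h hq₀).trans (le_max_left _ _)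
    · exact ((Real.rpow_le_rpow_of_exponent_le h hq₁).trans_eq (Real.rpow_one c)).trans
        (le_max_right _ _)
  rw [Measure.addHaar_ball_of_pos μ 0 hℓ, ← ENNReal.ofReal_toReal measure_ball_lt_top.ne,
    ← ENNReal.ofReal_mul (by positivity), ENNReal.ofReal_rpow_of_nonneg (by positivity) hq₀,
    Real.mul_rpow (by positivity) ENNReal.toReal_nonneg, ← Real.rpow_natCast, ← Real.rpow_mul hℓ.le,
    mul_comm (max 1 c)]
  gcongr

theorem ENNReal.mul_ofReal_rpow_mul_mul_rpow_le {M W : ℝ≥0∞} (hM : M ≠ ⊤) {V c L s t : ℝ}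
    (hV : 0 ≤ V) (hs : 0 ≤ s) (ht : 0 ≤ t) (hst : s + t = 1) (hW : W ^ t ≤ ENNReal.ofReal (c * L)) :
    (M * ENNReal.ofReal V) ^ s * (M * W) ^ t ≤ ENNReal.ofReal (c * M.toReal * V ^ s * L) := by
  have hM_split :
      (M * ENNReal.ofReal V) ^ s * (M * W) ^ t = M * ENNReal.ofReal (V ^ s) * W ^ t := by
    rw [mul_rpow_of_nonneg _ _ hs, mul_rpow_of_nonneg _ _ ht, mul_mul_mul_comm,
      ← rpow_add_of_nonneg _ _ hs ht, hst, rpow_one, ofReal_rpow_of_nonneg hV hs, mul_assoc]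
  calc (M * ENNReal.ofReal V) ^ s * (M * W) ^ t
      ≤ ENNReal.ofReal M.toReal * ENNReal.ofReal (V ^ s) * ENNReal.ofReal (c * L) := by
        rw [hM_split, ofReal_toReal hM]; gcongr
    _ = ENNReal.ofReal (c * M.toReal * V ^ s * L) := by
        rw [← ofReal_mul toReal_nonneg, ← ofReal_mul (by positivity)]
        ring_nf

theorem near_field_sparse_estimate :
    ∃ C : ℕ → ℝ, ∀ d : ℕ, 0 < C d ∧
      ∀ (G : SchwartzMap (EuclideanSpace ℝ (Fin d)) ℝ) (p : ℝ≥0∞), 1 ≤ p →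
        ∀ (ℓ V : ℝ), 0 < ℓ → 0 ≤ V →
          ∀ S : Set (EuclideanSpace ℝ (Fin d)), MeasurableSet S →
            (∀ x : EuclideanSpace ℝ (Fin d), volume (S ∩ Metric.ball x ℓ) ≤ ENNReal.ofReal V) →
            ∀ u₀ : EuclideanSpace ℝ (Fin d) → ℝ, MemLp u₀ p volume →
              eLpNorm (fun x => ∫ y,
                  (Metric.ball (0 : EuclideanSpace ℝ (Fin d)) ℓ).indicator (⇑G) (x - y) * S.indicator u₀ y) p volume
                ≤ ENNReal.ofReal (C d * (eLpNorm (⇑G) ⊤ volume).toReal *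
                    V ^ (1 - 1 / p.toReal) * ℓ ^ ((d : ℝ) / p.toReal)) * eLpNorm u₀ p volume := by
  refine ⟨fun d ↦ max 1 (volume (ball (0 : EuclideanSpace ℝ (Fin d)) 1)).toReal,
    fun d ↦ ⟨by positivity, ?_⟩⟩
  intro G p hp ℓ V hℓ hV S hS hSV u₀ hu₀
  set M := eLpNorm G ⊤ volume
  have hGM : ∀ z, ‖G z‖ₑ ≤ M := G.continuous.enorm_le_eLpNorm_top
  have hp₀ : 0 ≤ 1 / p.toReal := by positivity
  have hp₁ := ENNReal.one_div_toReal_le_one hp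
  calc _ ≤ eLpNorm (fun x ↦ ∫⁻ y, localKernel G ℓ S x y * ‖u₀ y‖ₑ) p volume :=
        eLpNorm_mono_enorm fun x ↦
          (enorm_integral_indicator_ball_mul_le _ _ _ _ _ x).trans_eq (enorm_eq_self _).symm
    _ ≤ (M * ENNReal.ofReal V) ^ (1 - 1 / p.toReal)
          * (M * volume (ball (0 : EuclideanSpace ℝ (Fin d)) ℓ)) ^ (1 / p.toReal)
          * eLpNorm u₀ p volume := by
        rw [← eLpNorm_enorm u₀]
        exact eLpNorm_lintegral_mul_le_of_schur
          (measurable_uncurry_localKernel G.continuous.stronglyMeasurable ℓ hS) hu₀.1.enorm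
          (fun x ↦ (lintegral_localKernel_right_le hGM ℓ hS x).trans (by gcongr; exact hSV x))
          (lintegral_localKernel_left_le hGM ℓ) hp
    _ ≤ _ := by
        gcongr
        refine ENNReal.mul_ofReal_rpow_mul_mul_rpow_le (G.memLp_top volume).eLpNorm_ne_top hV
          (sub_nonneg.2 hp₁) hp₀ (sub_add_cancel _ _) ?_
        simpa only [finrank_euclideanSpace_fin, mul_one_div] using
          Measure.addHaar_ball_rpow_le (volume : Measure (EuclideanSpace ℝ (Fin d))) hℓ hp₀ hp₁
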